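/- For every tree T on a finite set I, the poset Ad(T) of T-admissible partitions of I, ordered by refinement, is a lattice; its minimum is the partition of I into singletons and its maximum is the partition of I with the single block I. -/

import Mathlib

open Finset

/-- A rooted binary tree with leaves labeled in `α`. -/
inductive BTree (α : Type) : Type where
  | leaf : α → BTree α
  | node : BTree α → BTree α → BTree α

namespace BTree

variable {α : Type} [DecidableEq α]

/-- The list of leaf labels of the tree. -/
def leafList : BTree α → List α
  | .leaf a => [a]
  | .node l r => l.leafList ++ r.leafList

/-- The set of leaf labels of the tree. -/
def leaves (t : BTree α) : Finset α := t.leafList.toFinset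

/-- `t` is a tree on the finite set `I`: its leaves are labeled bijectively by `I`. -/
def IsTreeOn (t : BTree α) (I : Finset α) : Prop :=
  t.leafList.Nodup ∧ t.leaves = I

/-- The set `V(t)` of internal vertices of the tree, each internal vertex being
represented by the set of its ancestor leaves (the leaf labels of the subtree
rooted there).  In this representation a vertex `v` is below a vertex `w` in the
ancestor order (i.e. `w` lies on the path from `v` to the root) exactly when
`v ⊆ w`. -/
def vertexSet : BTree α → Finset (Finset α)
  | .leaf _ => ∅
  | .node l r => insert (l.leaves ∪ r.leaves) (l.vertexSet ∪ r.vertexSet)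

/-- The list of internal vertices of the tree, recorded as the pairs
(left subtree, right subtree) hanging at each internal vertex. -/
def nodes : BTree α → List (BTree α × BTree α)
  | .leaf _ => []
  | .node l r => (l, r) :: (l.nodes ++ r.nodes)

/-- `meetVertex t i j` is the internal vertex `v_{(i,j)}` at which the paths from the
leaves labeled `i` and `j` towards the root first meet (as the set of its ancestor
leaves); meaningful when `i ≠ j` are both leaf labels of `t`. -/
def meetVertex : BTree α → α → α → Finset α
  | .leaf a, _, _ => {a}
  | .node l r, i, j =>
    if i ∈ l.leaves ∧ j ∈ l.leaves then l.meetVertex i j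
    else if i ∈ r.leaves ∧ j ∈ r.leaves then r.meetVertex i j
    else l.leaves ∪ r.leaves

/-- `S(J) = { v_{(i,j)} : i, j ∈ J, i ≠ j }`. -/
def S (t : BTree α) (J : Finset α) : Finset (Finset α) :=
  ((J ×ˢ J).filter fun p => p.1 ≠ p.2).image fun p => t.meetVertex p.1 p.2

/-- A partition `π` of `I` is `T`-admissible when `S(B) ∩ S(B') = ∅` for every pair of
distinct blocks `B, B'` of `π`. -/
def Admissible (t : BTree α) {I : Finset α} (π : Finpartition I) : Prop :=
  ∀ B ∈ π.parts, ∀ C ∈ π.parts, B ≠ C → t.S B ∩ t.S C = ∅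

/-- A nice total order on the internal vertices of `T`, encoded by an integer-valued
ranking function: it is injective on `V(T)` and is a linear extension of the ancestor
order (a vertex `v` is below `w`, i.e. `w` is on the path from `v` to the root, iff
`v ⊆ w` in the ancestor-leaves representation). -/
def IsNiceOrder (t : BTree α) (ord : Finset α → ℕ) : Prop :=
  Set.InjOn ord ↑t.vertexSet ∧
    ∀ v ∈ t.vertexSet, ∀ w ∈ t.vertexSet, v ⊆ w → ord v ≤ ord w

/-- A nice total order identifying `V(T)` with `{1, …, n}`. -/
def IsNiceLabeling (t : BTree α) (n : ℕ) (ord : Finset α → ℕ) : Prop :=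
  t.IsNiceOrder ord ∧ t.vertexSet.image ord = Finset.Icc 1 n

end BTree

/-- The poset `Ad(T)` of `T`-admissible partitions of `I`, ordered by refinement
(the order is inherited from the refinement order on `Finpartition I`). -/
def AdPartition {α : Type} [DecidableEq α] (T : BTree α) (I : Finset α) : Type :=
  {π : Finpartition I // T.Admissible π}

namespace AdPartition

variable {α : Type} [DecidableEq α] {T : BTree α} {I : Finset α}

instance : PartialOrder (AdPartition T I) := Subtype.partialOrder _

/-- The set `V(π)` of internal vertices of a partition: the union of the `S(B)` over
the blocks `B` of `π`. -/
def verts (T : BTree α) {I : Finset α} (π : Finpartition I) : Finset (Finset α) :=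
  π.parts.sup fun B => T.S B

/-- The edge label `λ(π, τ)` of a covering relation `π ⋖ τ` in `Ad(T)`: the unique
internal vertex `v` with `V(τ) = V(π) ∪ {v}` (extracted here as the union of the
finset `V(τ) \ V(π)`, which is the singleton `{v}` when `π ⋖ τ`). -/
def label (T : BTree α) {I : Finset α} (π τ : AdPartition T I) : Finset α :=
  (verts T τ.1 \ verts T π.1).sup id

/-- The label sequence, with respect to a nice order `ord`, of a saturated chain
recorded as a list of consecutive elements. -/
def labelSeq (T : BTree α) {I : Finset α} (ord : Finset α → ℕ)
    (c : List (AdPartition T I)) : List ℕ :=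
  (c.zip c.tail).map fun p => ord (label T p.1 p.2)

/-- The atom of `Ad(T)` whose unique doubleton block is `{p, q}`, all other blocks
being singletons. -/
def IsAtomPart (T : BTree α) (I : Finset α) (a : AdPartition T I) (p q : α) : Prop :=
  p ≠ q ∧ a.1.parts = insert {p, q} ((I \ {p, q}).image fun x => ({x} : Finset α))

end AdPartition

section LatticeGen

variable {P : Type*} [PartialOrder P]

/-- A subset of a partial order closed under existing pairwise joins and meets. -/
def IsLatClosed (D : Set P) : Prop :=
  (∀ x ∈ D, ∀ y ∈ D, ∀ z, IsLUB {x, y} z → z ∈ D) ∧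
    (∀ x ∈ D, ∀ y ∈ D, ∀ z, IsGLB {x, y} z → z ∈ D)

/-- The sublattice generated by a subset of a partial order: the smallest subset
containing it that is closed under pairwise joins and meets. -/
def latticeGen (s : Set P) : Set P :=
  ⋂₀ {D : Set P | s ⊆ D ∧ IsLatClosed D}

/-- The subset `D`, with the induced join and meet, is a distributive lattice:
`x ∧ (y ∨ z) = (x ∧ y) ∨ (x ∧ z)` for all `x, y, z ∈ D`. -/
def IsDistribSet (D : Set P) : Prop :=
  ∀ x ∈ D, ∀ y ∈ D, ∀ z ∈ D,
    ∀ yz, IsLUB {y, z} yz → ∀ w, IsGLB {x, yz} w →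
      ∀ xy, IsGLB {x, y} xy → ∀ xz, IsGLB {x, z} xz →
        ∀ u, IsLUB {xy, xz} u → w = u

end LatticeGen

/-! Admissibility passes to common refinements, and the discrete and one-block partitions are
admissible, so `Ad(T)` is a finite meet-semilattice with top and bottom; joins then exist as
meets of upper bounds. -/

namespace BTree

variable {α : Type} [DecidableEq α]

theorem leaves_nonempty (t : BTree α) : t.leaves.Nonempty := by
  induction t with
  | leaf a => exact ⟨a, by simp [leaves, leafList]⟩
  | node l r ihl _ =>
    obtain ⟨a, ha⟩ := ihl
    exact ⟨a, by simp_all [leaves, leafList]⟩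

theorem S_mono (t : BTree α) {J K : Finset α} (h : J ⊆ K) : t.S J ⊆ t.S K :=
  image_subset_image (filter_subset_filter _ (product_subset_product h h))

theorem S_singleton (t : BTree α) (a : α) : t.S {a} = ∅ := by
  simp [S]

theorem admissible_of_subsingleton_parts (t : BTree α) {I : Finset α} {π : Finpartition I}
    (hπ : (π.parts : Set (Finset α)).Subsingleton) : t.Admissible π :=
  fun _ hB _ hC hne => absurd (hπ hB hC) hne

theorem admissible_bot (t : BTree α) (I : Finset α) : t.Admissible (⊥ : Finpartition I) := by
  intro B hB C _ _
  obtain ⟨a, _, rfl⟩ := Finpartition.mem_bot_iff.1 hB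
  rw [t.S_singleton, empty_inter]

theorem admissible_top (t : BTree α) (I : Finset α) : t.Admissible (⊤ : Finpartition I) :=
  t.admissible_of_subsingleton_parts (Finpartition.parts_top_subsingleton I)

/-- Distinct blocks of `π ⊓ τ` lie in distinct blocks of `π` or in distinct blocks of `τ`,
and `S` is monotone. -/
theorem Admissible.inf {t : BTree α} {I : Finset α} {π τ : Finpartition I}
    (hπ : t.Admissible π) (hτ : t.Admissible τ) : t.Admissible (π ⊓ τ) := by
  intro B hB C hC hne
  rw [Finpartition.parts_inf] at hB hC
  obtain ⟨⟨b, c⟩, hbc, rfl⟩ := mem_image.1 (mem_of_mem_erase hB)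
  obtain ⟨⟨b', c'⟩, hbc', rfl⟩ := mem_image.1 (mem_of_mem_erase hC)
  rw [mem_product] at hbc hbc'
  refine subset_empty.1 ?_
  rcases eq_or_ne b b' with rfl | hbb'
  · have hcc' : c ≠ c' := by rintro rfl; exact hne rfl
    calc t.S (b ⊓ c) ∩ t.S (b ⊓ c') ⊆ t.S c ∩ t.S c' :=
          inter_subset_inter (t.S_mono inf_le_right) (t.S_mono inf_le_right)
      _ = ∅ := hτ c hbc.2 c' hbc'.2 hcc'
  · calc t.S (b ⊓ c) ∩ t.S (b' ⊓ c') ⊆ t.S b ∩ t.S b' :=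
          inter_subset_inter (t.S_mono inf_le_left) (t.S_mono inf_le_left)
      _ = ∅ := hπ b hbc.1 b' hbc'.1 hbb'

end BTree

theorem Finite.exists_isLUB {P : Type*} [SemilatticeInf P] [OrderTop P] [Finite P]
    (s : Set P) : ∃ z, IsLUB s z := by
  classical
  have := Fintype.ofFinite P
  refine ⟨(upperBounds s).toFinset.inf id, fun a ha => ?_, fun u hu => ?_⟩
  · exact Finset.le_inf fun u hu => (Set.mem_toFinset.1 hu) ha
  · exact Finset.inf_le (f := id) (Set.mem_toFinset.2 hu)

namespace AdPartition

variable {α : Type} [DecidableEq α] {T : BTree α} {I : Finset α}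

instance : SemilatticeInf (AdPartition T I) :=
  Subtype.semilatticeInf fun _ _ => BTree.Admissible.inf

instance : OrderBot (AdPartition T I) :=
  Subtype.orderBot (T.admissible_bot I)

instance : OrderTop (AdPartition T I) :=
  Subtype.orderTop (T.admissible_top I)

instance : Finite (AdPartition T I) :=
  inferInstanceAs (Finite {π : Finpartition I // T.Admissible π})

theorem parts_bot : (⊥ : AdPartition T I).1.parts = I.image fun i => ({i} : Finset α) := by
  rw [show (⊥ : AdPartition T I).1 = ⊥ from rfl, Finpartition.parts_bot, map_eq_image]
  rfl

theorem parts_top (hI : I.Nonempty) : (⊤ : AdPartition T I).1.parts = {I} :=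
  ((Finpartition.parts_nonempty _ hI.ne_empty).subset_singleton_iff).1
    (Finpartition.parts_top_subset I)

end AdPartition

/-- for every tree `T` on a finite set `I`, the poset `Ad(T)` of
`T`-admissible partitions of `I` under refinement is a lattice, whose minimum is the
partition of `I` into singletons and whose maximum is the one-block partition. -/
theorem stmt2 {α : Type} [DecidableEq α] (I : Finset α) (T : BTree α)
    (hT : T.IsTreeOn I) :
    (∀ π τ : AdPartition T I,
      (∃ m, IsGLB ({π, τ} : Set (AdPartition T I)) m) ∧
      (∃ j, IsLUB ({π, τ} : Set (AdPartition T I)) j)) ∧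
    (∃ bot : AdPartition T I,
      bot.1.parts = I.image (fun i => ({i} : Finset α)) ∧ ∀ π, bot ≤ π) ∧
    (∃ top : AdPartition T I, top.1.parts = {I} ∧ ∀ π, π ≤ top) :=
  ⟨fun π τ => ⟨⟨π ⊓ τ, isGLB_pair⟩, Finite.exists_isLUB _⟩,
    ⟨⊥, AdPartition.parts_bot, fun _ => bot_le⟩,
    ⟨⊤, AdPartition.parts_top (hT.2 ▸ T.leaves_nonempty), fun _ => le_top⟩⟩
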